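/- arXiv:2312.02182 — 5 statements merged into one kernel-verified Lean document; each statement's English description precedes it below -/
import Mathlib

section
/- If F : R^d → R is C¹, M-smooth, and (m,b)-dissipative (⟨∇F(x), x⟩ ≥ m‖x‖² - b for all x), then there exists a constant C depending only on M, ‖∇F(0)‖, m, b, δ such that F(x) - F(y) ≤ C √( min(1, δ^{-1}‖x-y‖) (1 + ‖x‖⁴ + ‖y‖⁴) ) for all x, y ∈ R^d and every fixed δ ∈ (0,1). -/
/-!
On the ball of radius `‖x‖ + ‖y‖` the gradient has norm at most `‖∇F 0‖ + M (‖x‖ + ‖y‖)`, so the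
mean value theorem bounds `F x - F y` by this quantity times `r = ‖x - y‖`. If `r ≤ δ` then
`r ≤ √(δ⁻¹ r)`, and otherwise `r ≤ ‖x‖ + ‖y‖`; either way `r ≤ (1 + ‖x‖ + ‖y‖) √(min 1 (δ⁻¹ r))`.
The power-mean inequality `(1 + ‖x‖ + ‖y‖)⁴ ≤ 27 (1 + ‖x‖⁴ + ‖y‖⁴)` finishes the estimate.
-/

open RealInnerProductSpace

theorem norm_fderiv_eq_norm_gradient {E : Type*} [NormedAddCommGroup E] [InnerProductSpace ℝ E]
    [CompleteSpace E] (f : E → ℝ) (z : E) : ‖fderiv ℝ f z‖ = ‖gradient f z‖ :=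
  ((InnerProductSpace.toDual ℝ E).symm.norm_map (fderiv ℝ f z)).symm

theorem norm_fderiv_le_of_lipschitzWith_gradient {E : Type*} [NormedAddCommGroup E]
    [InnerProductSpace ℝ E] [CompleteSpace E] {f : E → ℝ} {K : NNReal}
    (hK : LipschitzWith K (gradient f)) (z : E) :
    ‖fderiv ℝ f z‖ ≤ ‖gradient f 0‖ + K * ‖z‖ := by
  rw [norm_fderiv_eq_norm_gradient]
  calc ‖gradient f z‖ ≤ ‖gradient f 0‖ + ‖gradient f z - gradient f 0‖ := norm_le_insert' _ _
    _ ≤ ‖gradient f 0‖ + K * ‖z‖ := by simpa using hK.norm_sub_le z 0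

theorem norm_sub_le_of_norm_fderiv_le_add_mul {E G : Type*} [NormedAddCommGroup E]
    [NormedSpace ℝ E] [NormedAddCommGroup G] [NormedSpace ℝ G] {f : E → G} {A K : ℝ}
    (hf : Differentiable ℝ f) (hK : 0 ≤ K) (hbound : ∀ z, ‖fderiv ℝ f z‖ ≤ A + K * ‖z‖)
    (x y : E) : ‖f x - f y‖ ≤ (A + K * (‖x‖ + ‖y‖)) * ‖x - y‖ := by
  have hx : x ∈ Metric.closedBall (0 : E) (‖x‖ + ‖y‖) := by simp
  have hy : y ∈ Metric.closedBall (0 : E) (‖x‖ + ‖y‖) := by simp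
  refine (convex_closedBall _ _).norm_image_sub_le_of_norm_fderiv_le (fun z _ => hf z)
    (fun z hz => (hbound z).trans ?_) hy hx
  gcongr
  simpa using hz

theorem le_one_add_mul_sqrt_min {δ r s : ℝ} (hδ : 0 < δ) (hδ1 : δ ≤ 1) (hr : 0 ≤ r)
    (hrs : r ≤ s) : r ≤ (1 + s) * √(min 1 (δ⁻¹ * r)) := by
  rcases le_total 1 (δ⁻¹ * r) with h | h
  · rw [min_eq_left h, Real.sqrt_one, mul_one]
    linarith
  · rw [min_eq_right h]
    have hrδ : r ≤ δ := by rwa [inv_mul_le_iff₀ hδ, mul_one] at h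
    have hr_sqrt : r ≤ √(δ⁻¹ * r) := by
      rw [Real.le_sqrt hr (by positivity), sq]
      exact mul_le_mul_of_nonneg_right (hrδ.trans (hδ1.trans ((one_le_inv₀ hδ).mpr hδ1))) hr
    exact hr_sqrt.trans (le_mul_of_one_le_left (Real.sqrt_nonneg _) (by linarith))

theorem one_add_add_sq_le_sqrt {a b : ℝ} (ha : 0 ≤ a) (hb : 0 ≤ b) :
    (1 + a + b) ^ 2 ≤ √27 * √(1 + a ^ 4 + b ^ 4) := by
  have h2 : (1 + a + b) ^ 2 ≤ 3 * (1 + a ^ 2 + b ^ 2) := by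
    nlinarith [sq_nonneg (a - b), sq_nonneg (a - 1), sq_nonneg (b - 1)]
  have h4 : (1 + a ^ 2 + b ^ 2) ^ 2 ≤ 3 * (1 + a ^ 4 + b ^ 4) := by
    nlinarith [sq_nonneg (a ^ 2 - b ^ 2), sq_nonneg (a ^ 2 - 1), sq_nonneg (b ^ 2 - 1)]
  rw [← Real.sqrt_mul (by norm_num), Real.le_sqrt (by positivity) (by positivity)]
  calc ((1 + a + b) ^ 2) ^ 2 ≤ (3 * (1 + a ^ 2 + b ^ 2)) ^ 2 := by gcongr
    _ ≤ 27 * (1 + a ^ 4 + b ^ 4) := by nlinarith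

theorem stmt_3_general (d : ℕ) (M δ : ℝ) (hδ : δ ∈ Set.Ioo (0:ℝ) 1)
    (F : EuclideanSpace ℝ (Fin d) → ℝ)
    (hF : ContDiff ℝ 1 F)
    (hM : ∀ x y, ‖gradient F x - gradient F y‖ ≤ M * ‖x - y‖) :
    ∃ C : ℝ, ∀ x y : EuclideanSpace ℝ (Fin d),
      F x - F y ≤ C * Real.sqrt (min 1 (δ⁻¹ * ‖x - y‖) * (1 + ‖x‖ ^ 4 + ‖y‖ ^ 4)) := by
  set K := M.toNNReal
  set G := ‖gradient F 0‖
  have hLip : LipschitzWith K (gradient F) :=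
    LipschitzWith.of_dist_le' fun x y => by simpa only [dist_eq_norm] using hM x y
  refine ⟨(G + K) * √27, fun x y => ?_⟩
  set s := ‖x‖ + ‖y‖
  set t := min 1 (δ⁻¹ * ‖x - y‖)
  have hGK : G + K * s ≤ (G + K) * (1 + s) := by
    nlinarith [mul_nonneg (norm_nonneg (gradient F 0)) (by positivity : (0 : ℝ) ≤ s), K.2]
  calc F x - F y ≤ (G + K * s) * ‖x - y‖ :=
        (le_abs_self _).trans <| norm_sub_le_of_norm_fderiv_le_add_mul
          (hF.differentiable one_ne_zero) K.2 (norm_fderiv_le_of_lipschitzWith_gradient hLip) x y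
    _ ≤ (G + K) * (1 + s) * ((1 + s) * √t) :=
        mul_le_mul hGK (le_one_add_mul_sqrt_min hδ.1 hδ.2.le (norm_nonneg _) (norm_sub_le x y))
          (norm_nonneg _) (by positivity)
    _ = (G + K) * (1 + ‖x‖ + ‖y‖) ^ 2 * √t := by ring
    _ ≤ (G + K) * (√27 * √(1 + ‖x‖ ^ 4 + ‖y‖ ^ 4)) * √t := by
        gcongr
        exact one_add_add_sq_le_sqrt (norm_nonneg x) (norm_nonneg y)
    _ = (G + K) * √27 * √(t * (1 + ‖x‖ ^ 4 + ‖y‖ ^ 4)) := by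
        rw [Real.sqrt_mul' _ (by positivity)]
        ring

theorem stmt_3 (d : ℕ) (M m b δ : ℝ) (hδ : δ ∈ Set.Ioo (0:ℝ) 1)
    (F : EuclideanSpace ℝ (Fin d) → ℝ)
    (hF : ContDiff ℝ 1 F)
    (hM : ∀ x y, ‖gradient F x - gradient F y‖ ≤ M * ‖x - y‖)
    (hdiss : ∀ x, m * ‖x‖ ^ 2 - b ≤ ⟪gradient F x, x⟫) :
    ∃ C : ℝ, ∀ x y : EuclideanSpace ℝ (Fin d),
      F x - F y ≤ C * Real.sqrt (min 1 (δ⁻¹ * ‖x - y‖) * (1 + ‖x‖ ^ 4 + ‖y‖ ^ 4)) :=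
  stmt_3_general d M δ hδ F hF hM
end

section
/- Functional H_F is bounded: let r > 0, c₁, c₂, ε > 0 with 2c₁ > c₂ and min(c₁,c₂) > r, and F : R^d → R be C¹ with bounded gradient. Then for every continuous path ξ : (-∞,0] → R^d with sup_{s≤0} e^{rs}‖ξ(s)‖ < ∞, the vector H_F(ξ) = -( c₁ ∫_{-∞}^0 e^{c₁ s} ∇F(ξ(s)) ds ) / √( ε + c₂ ∫_{-∞}^0 e^{c₂ s} ‖∇F(ξ(s))‖² ds ) satisfies ‖H_F(ξ)‖ ≤ c₁ / √((2c₁ - c₂) c₂). -/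
/-!
Writing `e^{c₁ s} = e^{(c₁ - c₂/2) s} · e^{c₂ s / 2}` and applying Cauchy–Schwarz on `(-∞, 0]` gives
`‖∫ e^{c₁ s} ∇F(ξ s) ds‖² ≤ (2c₁ - c₂)⁻¹ ∫ e^{c₂ s} ‖∇F(ξ s)‖² ds`, so the numerator of `H_F` is
controlled by the square root of the integral in its denominator.
-/

/-- The drift functional `H_F` of the Adam-like algorithm. -/
noncomputable def HF (d : ℕ) (c₁ c₂ ε : ℝ) (F : EuclideanSpace ℝ (Fin d) → ℝ)
    (ξ : ℝ → EuclideanSpace ℝ (Fin d)) : EuclideanSpace ℝ (Fin d) :=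
  -((Real.sqrt (ε + c₂ * ∫ s in Set.Iic (0:ℝ),
        Real.exp (c₂ * s) * ‖gradient F (ξ s)‖ ^ 2))⁻¹ •
      (c₁ • ∫ s in Set.Iic (0:ℝ), Real.exp (c₁ * s) • gradient F (ξ s)))

open MeasureTheory Set Real

theorem ContDiff.continuous_gradient {E : Type*} [NormedAddCommGroup E] [InnerProductSpace ℝ E]
    [CompleteSpace E] {F : E → ℝ} (hF : ContDiff ℝ 1 F) : Continuous (gradient F) :=
  (InnerProductSpace.toDual ℝ E).symm.continuous.comp (hF.continuous_fderiv one_ne_zero)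

theorem integral_norm_mul_norm_le_sqrt_mul_sqrt {α E : Type*} [MeasurableSpace α] {μ : Measure α}
    [NormedAddCommGroup E] {f g : α → E} (hf : MemLp f 2 μ) (hg : MemLp g 2 μ) :
    ∫ a, ‖f a‖ * ‖g a‖ ∂μ ≤ √(∫ a, ‖f a‖ ^ 2 ∂μ) * √(∫ a, ‖g a‖ ^ 2 ∂μ) := by
  simpa only [rpow_two, ← sqrt_eq_rpow] using
    integral_mul_norm_le_Lp_mul_Lq HolderConjugate.two_two (by simpa using hf) (by simpa using hg)

theorem sq_norm_setIntegral_exp_smul_le {E : Type*} [NormedAddCommGroup E] [NormedSpace ℝ E]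
    {a b : ℝ} (hab : b < 2 * a) {G : ℝ → E}
    (hG : AEStronglyMeasurable G (volume.restrict (Iic 0)))
    (hint : IntegrableOn (fun s => exp (b * s) * ‖G s‖ ^ 2) (Iic 0)) :
    (2 * a - b) * ‖∫ s in Iic 0, exp (a * s) • G s‖ ^ 2 ≤
      ∫ s in Iic 0, exp (b * s) * ‖G s‖ ^ 2 := by
  have hab' : 0 < 2 * a - b := by linarith
  have exp_sq (x : ℝ) : exp x ^ 2 = exp (2 * x) := by rw [sq, ← exp_add, two_mul]
  set f : ℝ → ℝ := fun s => exp ((a - b / 2) * s)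
  set g : ℝ → ℝ := fun s => exp (b / 2 * s) * ‖G s‖
  have hf_sq (s : ℝ) : ‖f s‖ ^ 2 = exp ((2 * a - b) * s) := by
    rw [norm_of_nonneg (exp_pos _).le, exp_sq]; ring_nf
  have hg_sq (s : ℝ) : ‖g s‖ ^ 2 = exp (b * s) * ‖G s‖ ^ 2 := by
    rw [norm_mul, norm_norm, norm_of_nonneg (exp_pos _).le, mul_pow, exp_sq]; ring_nf
  have hfg (s : ℝ) : ‖f s‖ * ‖g s‖ = ‖exp (a * s) • G s‖ := by
    rw [norm_mul, ← mul_assoc, ← norm_mul, ← exp_add, norm_norm, norm_smul]; ring_nf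
  have hf : MemLp f 2 (volume.restrict (Iic 0)) :=
    (memLp_two_iff_integrable_sq_norm (by fun_prop : Continuous f).aestronglyMeasurable).2
      (by simp only [hf_sq]; exact integrableOn_exp_mul_Iic hab' 0)
  have hg : MemLp g 2 (volume.restrict (Iic 0)) :=
    (memLp_two_iff_integrable_sq_norm (f := g)
      ((by fun_prop : Continuous fun s => exp (b / 2 * s)).aestronglyMeasurable.mul hG.norm)).2
      (by simp only [hg_sq]; exact hint)
  have hcs := integral_norm_mul_norm_le_sqrt_mul_sqrt hf hg
  simp only [hfg, hf_sq, hg_sq, integral_exp_mul_Iic hab', mul_zero, exp_zero] at hcs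
  have hN := (norm_integral_le_integral_norm _).trans hcs
  set I := ∫ s in Iic 0, exp (b * s) * ‖G s‖ ^ 2
  have hI : 0 ≤ I := setIntegral_nonneg measurableSet_Iic fun s _ => by positivity
  calc (2 * a - b) * ‖∫ s in Iic 0, exp (a * s) • G s‖ ^ 2
      ≤ (2 * a - b) * (√(1 / (2 * a - b)) * √I) ^ 2 :=
        mul_le_mul_of_nonneg_left (pow_le_pow_left₀ (norm_nonneg _) hN 2) hab'.le
    _ = I := by rw [mul_pow, sq_sqrt (by positivity), sq_sqrt hI]; field_simp

theorem norm_HF {d : ℕ} {c₁ : ℝ} (hc₁ : 0 ≤ c₁) (c₂ ε : ℝ) (F : EuclideanSpace ℝ (Fin d) → ℝ)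
    (ξ : ℝ → EuclideanSpace ℝ (Fin d)) :
    ‖HF d c₁ c₂ ε F ξ‖ = c₁ * ‖∫ s in Iic 0, exp (c₁ * s) • gradient F (ξ s)‖ /
      √(ε + c₂ * ∫ s in Iic 0, exp (c₂ * s) * ‖gradient F (ξ s)‖ ^ 2) := by
  rw [HF, norm_neg, norm_smul, norm_smul, norm_inv, norm_of_nonneg (sqrt_nonneg _),
    norm_of_nonneg hc₁, inv_mul_eq_div]

theorem stmt_9_general (d : ℕ) (c₁ c₂ ε : ℝ) (hc : c₂ < 2 * c₁)
    (hε : 0 < ε) (hc₂ : 0 < c₂)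
    (F : EuclideanSpace ℝ (Fin d) → ℝ) (hF : ContDiff ℝ 1 F)
    (A : ℝ) (hA : ∀ x, ‖gradient F x‖ ≤ A)
    (ξ : ℝ → EuclideanSpace ℝ (Fin d)) (hξ : Continuous ξ) :
    ‖HF d c₁ c₂ ε F ξ‖ ≤ c₁ / Real.sqrt ((2 * c₁ - c₂) * c₂) := by
  have hc₁ : 0 < c₁ := by linarith
  have hG : Continuous fun s => gradient F (ξ s) := hF.continuous_gradient.comp hξ
  have hint : IntegrableOn (fun s => exp (c₂ * s) * ‖gradient F (ξ s)‖ ^ 2) (Iic 0) :=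
    (integrableOn_exp_mul_Iic hc₂ 0).mul_bdd (hG.norm.pow 2).aestronglyMeasurable
      (ae_of_all _ fun s => by simpa using pow_le_pow_left₀ (norm_nonneg _) (hA (ξ s)) 2)
  have hCS := sq_norm_setIntegral_exp_smul_le hc hG.aestronglyMeasurable hint
  set N := ∫ s in Iic 0, exp (c₁ * s) • gradient F (ξ s)
  set I := ∫ s in Iic 0, exp (c₂ * s) * ‖gradient F (ξ s)‖ ^ 2
  have hI : 0 ≤ I := setIntegral_nonneg measurableSet_Iic fun s _ => by positivity
  have hS : 0 < (2 * c₁ - c₂) * c₂ := mul_pos (by linarith) hc₂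
  have hNS : ‖N‖ * √((2 * c₁ - c₂) * c₂) ≤ √(ε + c₂ * I) := by
    rw [← sqrt_sq (norm_nonneg N), ← sqrt_mul (sq_nonneg _)]
    exact sqrt_le_sqrt (by nlinarith [mul_le_mul_of_nonneg_left hCS hc₂.le])
  rw [norm_HF hc₁.le, div_le_div_iff₀ (sqrt_pos.2 (by positivity)) (sqrt_pos.2 hS), mul_assoc]
  exact mul_le_mul_of_nonneg_left hNS hc₁.le

theorem stmt_9 (d : ℕ) (r c₁ c₂ ε : ℝ) (hr : 0 < r) (hc : c₂ < 2 * c₁)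
    (hrc : r < min c₁ c₂) (hε : 0 < ε) (hc₂ : 0 < c₂)
    (F : EuclideanSpace ℝ (Fin d) → ℝ) (hF : ContDiff ℝ 1 F)
    (A : ℝ) (hA : ∀ x, ‖gradient F x‖ ≤ A)
    (ξ : ℝ → EuclideanSpace ℝ (Fin d)) (hξ : Continuous ξ)
    (B : ℝ) (hξB : ∀ s ≤ (0:ℝ), Real.exp (r * s) * ‖ξ s‖ ≤ B) :
    ‖HF d c₁ c₂ ε F ξ‖ ≤ c₁ / Real.sqrt ((2 * c₁ - c₂) * c₂) :=
  stmt_9_general d c₁ c₂ ε hc hε hc₂ F hF A hA ξ hξ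
end

section
/- Difference of drift functionals for two losses: let F, G : R^d → R be C¹ and M-smooth with bounded gradients A_F = sup‖∇F‖, A_G = sup‖∇G‖, and let ε, c₁, c₂ > 0 with 2c₁ > c₂. Then ‖H_F(ξ) - H_G(ξ)‖ ≤ C ∫_{-∞}^0 e^{min(c₁,c₂) s} ‖∇F(ξ(s)) - ∇G(ξ(s))‖ ds for all ξ ∈ C_r, where C depends only on c₁, c₂, ε, A_F, A_G, M, d. -/
/-!
Write `J = ∫ e^{c₁ s} ∇F(ξ s) ds` and `I = ∫ e^{c₂ s} ‖∇F(ξ s)‖² ds` (similarly for `G`), so that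
`H_F = -c₁ (ε + c₂ I_F)^{-1/2} J_F`. Both `J_F - J_G` and `I_F - I_G` are integrals of quantities
bounded pointwise by `e^{c s} ‖∇F(ξ s) - ∇G(ξ s)‖` (for `I`, times `A_F + A_G`), and
`e^{c s} ≤ e^{min(c₁, c₂) s}` for `s ≤ 0`. Since `x ↦ (ε + x)^{-1/2}` is `(2ε√ε)⁻¹`-Lipschitz on
`[0, ∞)` and `‖J_G‖ ≤ A_G / c₁`, the identity `u J_F - v J_G = u (J_F - J_G) + (u - v) J_G` gives the
bound.
-/

open MeasureTheory Set Real

theorem measurable_gradient {E : Type*} [NormedAddCommGroup E] [InnerProductSpace ℝ E]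
    [CompleteSpace E] [MeasurableSpace E] [BorelSpace E] (f : E → ℝ) :
    Measurable (gradient f) :=
  (InnerProductSpace.toDual ℝ E).symm.continuous.measurable.comp (measurable_fderiv ℝ f)

theorem norm_smul_sub_smul_le {E : Type*} [SeminormedAddCommGroup E] [NormedSpace ℝ E]
    (u v : ℝ) (x y : E) : ‖u • x - v • y‖ ≤ |u| * ‖x - y‖ + |u - v| * ‖y‖ := by
  calc ‖u • x - v • y‖ = ‖u • (x - y) + (u - v) • y‖ := by rw [smul_sub, sub_smul]; abel_nf
    _ ≤ |u| * ‖x - y‖ + |u - v| * ‖y‖ := by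
      simpa only [norm_smul, Real.norm_eq_abs] using norm_add_le (u • (x - y)) ((u - v) • y)

theorem abs_inv_sqrt_add_sub_inv_sqrt_add_le {ε a b : ℝ} (hε : 0 < ε) (ha : 0 ≤ a)
    (hb : 0 ≤ b) : |(√(ε + a))⁻¹ - (√(ε + b))⁻¹| ≤ |a - b| / (2 * ε * √ε) := by
  set x := √(ε + a)
  set y := √(ε + b)
  have hx : √ε ≤ x := Real.sqrt_le_sqrt (by linarith)
  have hy : √ε ≤ y := Real.sqrt_le_sqrt (by linarith)
  have hε' : 0 < √ε := Real.sqrt_pos.mpr hε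
  have hdiff : (x⁻¹ - y⁻¹) * (x * y * (x + y)) = b - a := by
    have hx0 : x ≠ 0 := (hε'.trans_le hx).ne'
    have hy0 : y ≠ 0 := (hε'.trans_le hy).ne'
    rw [show b - a = y ^ 2 - x ^ 2 by
      rw [Real.sq_sqrt (by linarith), Real.sq_sqrt (by linarith)]; ring]
    field_simp
    ring
  have hden : 2 * ε * √ε ≤ x * y * (x + y) := by
    have hεε : ε = √ε * √ε := (Real.mul_self_sqrt hε.le).symm
    calc 2 * ε * √ε = (√ε * √ε) * (√ε + √ε) := by rw [← hεε]; ring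
      _ ≤ x * y * (x + y) := by gcongr
  rw [le_div_iff₀ (by positivity), abs_sub_comm a b, ← hdiff, abs_mul,
    abs_of_pos ((by positivity : (0:ℝ) < 2 * ε * √ε).trans_le hden)]
  gcongr

section WeightedIntegrals

variable {E : Type*} [NormedAddCommGroup E] [NormedSpace ℝ E]

theorem integrableOn_exp_mul_smul_Iic {c A : ℝ} (hc : 0 < c) {g : ℝ → E}
    (hg : AEStronglyMeasurable g) (hgA : ∀ s, ‖g s‖ ≤ A) :
    IntegrableOn (fun s => exp (c * s) • g s) (Iic 0) := by
  refine Integrable.mono' ((integrableOn_exp_mul_Iic hc 0).mul_const A)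
    (((continuous_exp.comp (continuous_const_mul c)).aestronglyMeasurable.smul hg).restrict) ?_
  filter_upwards with s
  rw [norm_smul, Real.norm_of_nonneg (exp_pos _).le]
  exact mul_le_mul_of_nonneg_left (hgA s) (exp_pos _).le

theorem norm_setIntegral_exp_mul_smul_Iic_le {c A : ℝ} (hc : 0 < c) {g : ℝ → E}
    (hgA : ∀ s, ‖g s‖ ≤ A) : ‖∫ s in Iic 0, exp (c * s) • g s‖ ≤ A / c := by
  calc ‖∫ s in Iic 0, exp (c * s) • g s‖ ≤ ∫ s in Iic 0, exp (c * s) * A := by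
        refine norm_integral_le_of_norm_le ((integrableOn_exp_mul_Iic hc 0).mul_const A) ?_
        filter_upwards with s
        rw [norm_smul, Real.norm_of_nonneg (exp_pos _).le]
        exact mul_le_mul_of_nonneg_left (hgA s) (exp_pos _).le
    _ = A / c := by rw [integral_mul_const, integral_exp_mul_Iic hc, mul_zero, exp_zero]; ring

theorem norm_setIntegral_Iic_le_of_le_exp_mul {φ : ℝ → E} {u : ℝ → ℝ} {m c k : ℝ}
    (hmc : m ≤ c) (hk : 0 ≤ k) (hu : ∀ s, 0 ≤ u s)
    (hint : IntegrableOn (fun s => exp (m * s) * u s) (Iic 0))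
    (hφ : ∀ s, ‖φ s‖ ≤ k * (exp (c * s) * u s)) :
    ‖∫ s in Iic 0, φ s‖ ≤ k * ∫ s in Iic 0, exp (m * s) * u s := by
  rw [← integral_const_mul]
  refine norm_integral_le_of_norm_le (hint.const_mul k) ?_
  filter_upwards [ae_restrict_mem measurableSet_Iic] with s hs
  refine (hφ s).trans (mul_le_mul_of_nonneg_left ?_ hk)
  exact mul_le_mul_of_nonneg_right
    (exp_le_exp.mpr (mul_le_mul_of_nonpos_right hmc hs)) (hu s)

/-- `H_F(ξ)` as a functional of the gradient path `s ↦ ∇F(ξ s)`. -/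
noncomputable def pathDrift (c₁ c₂ ε : ℝ) (g : ℝ → E) : E :=
  -((√(ε + c₂ * ∫ s in Iic 0, exp (c₂ * s) * ‖g s‖ ^ 2))⁻¹ •
      (c₁ • ∫ s in Iic 0, exp (c₁ * s) • g s))

theorem norm_pathDrift_sub_pathDrift_le {c₁ c₂ ε A B : ℝ} (hc₁ : 0 < c₁) (hc₂ : 0 < c₂)
    (hε : 0 < ε) {g h : ℝ → E} (hg : AEStronglyMeasurable g) (hh : AEStronglyMeasurable h)
    (hgA : ∀ s, ‖g s‖ ≤ A) (hhB : ∀ s, ‖h s‖ ≤ B) :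
    ‖pathDrift c₁ c₂ ε g - pathDrift c₁ c₂ ε h‖ ≤
      (c₁ / √ε + c₂ * (A + B) * B / (2 * ε * √ε)) *
        ∫ s in Iic 0, exp (min c₁ c₂ * s) * ‖g s - h s‖ := by
  have hA : 0 ≤ A := (norm_nonneg _).trans (hgA 0)
  have hB : 0 ≤ B := (norm_nonneg _).trans (hhB 0)
  set K := ∫ s in Iic 0, exp (min c₁ c₂ * s) * ‖g s - h s‖
  have hK : IntegrableOn (fun s => exp (min c₁ c₂ * s) * ‖g s - h s‖) (Iic 0) :=
    integrableOn_exp_mul_smul_Iic (lt_min hc₁ hc₂) (hg.sub hh).norm (A := A + B) fun s => by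
      simpa using (norm_sub_le _ _).trans (add_le_add (hgA s) (hhB s))
  set Jg := ∫ s in Iic 0, exp (c₁ * s) • g s
  set Jh := ∫ s in Iic 0, exp (c₁ * s) • h s
  set Ig := ∫ s in Iic 0, exp (c₂ * s) * ‖g s‖ ^ 2
  set Ih := ∫ s in Iic 0, exp (c₂ * s) * ‖h s‖ ^ 2
  set ug := (√(ε + c₂ * Ig))⁻¹
  set uh := (√(ε + c₂ * Ih))⁻¹
  have hJ : ‖Jg - Jh‖ ≤ 1 * K := by
    rw [← integral_sub (integrableOn_exp_mul_smul_Iic hc₁ hg hgA)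
      (integrableOn_exp_mul_smul_Iic hc₁ hh hhB)]
    refine norm_setIntegral_Iic_le_of_le_exp_mul (min_le_left _ _) zero_le_one
      (fun s => norm_nonneg _) hK fun s => ?_
    rw [← smul_sub, norm_smul, Real.norm_of_nonneg (exp_pos _).le, one_mul]
  have hI : |Ig - Ih| ≤ (A + B) * K := by
    have hsq {f : ℝ → E} {C : ℝ} (hf : AEStronglyMeasurable f) (hfC : ∀ s, ‖f s‖ ≤ C) :
        IntegrableOn (fun s => exp (c₂ * s) * ‖f s‖ ^ 2) (Iic 0) :=
      integrableOn_exp_mul_smul_Iic hc₂ (hf.norm.pow 2) (A := C ^ 2) fun s => by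
        simpa using pow_le_pow_left₀ (norm_nonneg _) (hfC s) 2
    rw [← Real.norm_eq_abs, ← integral_sub (hsq hg hgA) (hsq hh hhB)]
    refine norm_setIntegral_Iic_le_of_le_exp_mul (min_le_right _ _) (add_nonneg hA hB)
      (fun s => norm_nonneg _) hK fun s => ?_
    have hfactor : ‖g s‖ ^ 2 - ‖h s‖ ^ 2 = (‖g s‖ + ‖h s‖) * (‖g s‖ - ‖h s‖) := by ring
    rw [← mul_sub, hfactor, Real.norm_eq_abs, abs_mul, abs_mul, abs_of_pos (exp_pos _),
      abs_of_nonneg (by positivity : 0 ≤ ‖g s‖ + ‖h s‖), mul_left_comm]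
    gcongr
    exacts [hgA s, hhB s, abs_norm_sub_norm_le _ _]
  have hu : |ug - uh| ≤ c₂ * ((A + B) * K) / (2 * ε * √ε) := by
    refine (abs_inv_sqrt_add_sub_inv_sqrt_add_le hε ?_ ?_).trans ?_
    · exact mul_nonneg hc₂.le (setIntegral_nonneg measurableSet_Iic fun s _ => by positivity)
    · exact mul_nonneg hc₂.le (setIntegral_nonneg measurableSet_Iic fun s _ => by positivity)
    · rw [← mul_sub, abs_mul, abs_of_pos hc₂]
      gcongr
  have hug : |ug| ≤ 1 / √ε := by
    rw [abs_of_nonneg (by positivity), one_div]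
    exact inv_anti₀ (Real.sqrt_pos.mpr hε) (Real.sqrt_le_sqrt (le_add_of_nonneg_right
      (mul_nonneg hc₂.le (setIntegral_nonneg measurableSet_Iic fun s _ => by positivity))))
  have hJh : ‖Jh‖ ≤ B / c₁ := norm_setIntegral_exp_mul_smul_Iic_le hc₁ hhB
  calc ‖pathDrift c₁ c₂ ε g - pathDrift c₁ c₂ ε h‖ = ‖(ug * c₁) • Jg - (uh * c₁) • Jh‖ := by
        rw [pathDrift, pathDrift, ← smul_smul, ← smul_smul, ← norm_neg, neg_sub, neg_sub_neg]
    _ ≤ |ug * c₁| * ‖Jg - Jh‖ + |ug * c₁ - uh * c₁| * ‖Jh‖ := norm_smul_sub_smul_le _ _ _ _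
    _ ≤ (1 / √ε * c₁) * (1 * K) + (c₂ * ((A + B) * K) / (2 * ε * √ε) * c₁) * (B / c₁) := by
        rw [← sub_mul, abs_mul, abs_mul, abs_of_pos hc₁]
        have hK0 : 0 ≤ K := setIntegral_nonneg measurableSet_Iic fun s _ => by positivity
        gcongr
    _ = (c₁ / √ε + c₂ * (A + B) * B / (2 * ε * √ε)) * K := by
        field_simp

end WeightedIntegrals

theorem stmt_11_general (d : ℕ) (r c₁ c₂ ε AF AG : ℝ) (hc₁ : 0 < c₁) (hc₂ : 0 < c₂)
    (hε : 0 < ε)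
    (F G : EuclideanSpace ℝ (Fin d) → ℝ)
    (hAF : ∀ x, ‖gradient F x‖ ≤ AF) (hAG : ∀ x, ‖gradient G x‖ ≤ AG) :
    ∃ C : ℝ, ∀ (ξ : ℝ → EuclideanSpace ℝ (Fin d)), Continuous ξ →
      ∀ B : ℝ, (∀ s ≤ (0:ℝ), Real.exp (r * s) * ‖ξ s‖ ≤ B) →
        ‖HF d c₁ c₂ ε F ξ - HF d c₁ c₂ ε G ξ‖ ≤
          C * ∫ s in Set.Iic (0:ℝ),
            Real.exp (min c₁ c₂ * s) * ‖gradient F (ξ s) - gradient G (ξ s)‖ := by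
  refine ⟨c₁ / √ε + c₂ * (AF + AG) * AG / (2 * ε * √ε), fun ξ hξ _ _ => ?_⟩
  have hgrad (f : EuclideanSpace ℝ (Fin d) → ℝ) : AEStronglyMeasurable fun s => gradient f (ξ s) :=
    ((measurable_gradient f).comp hξ.measurable).aestronglyMeasurable
  exact norm_pathDrift_sub_pathDrift_le hc₁ hc₂ hε (hgrad F) (hgrad G) (fun _ => hAF _)
    (fun _ => hAG _)

theorem stmt_11 (d : ℕ) (r c₁ c₂ ε M AF AG : ℝ) (hc₁ : 0 < c₁) (hc₂ : 0 < c₂)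
    (hc : c₂ < 2 * c₁) (hε : 0 < ε) (hr : 0 < r)
    (F G : EuclideanSpace ℝ (Fin d) → ℝ)
    (hF : ContDiff ℝ 1 F) (hG : ContDiff ℝ 1 G)
    (hMF : ∀ x y, ‖gradient F x - gradient F y‖ ≤ M * ‖x - y‖)
    (hMG : ∀ x y, ‖gradient G x - gradient G y‖ ≤ M * ‖x - y‖)
    (hAF : ∀ x, ‖gradient F x‖ ≤ AF) (hAG : ∀ x, ‖gradient G x‖ ≤ AG) :
    ∃ C : ℝ, ∀ (ξ : ℝ → EuclideanSpace ℝ (Fin d)), Continuous ξ →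
      ∀ B : ℝ, (∀ s ≤ (0:ℝ), Real.exp (r * s) * ‖ξ s‖ ≤ B) →
        ‖HF d c₁ c₂ ε F ξ - HF d c₁ c₂ ε G ξ‖ ≤
          C * ∫ s in Set.Iic (0:ℝ),
            Real.exp (min c₁ c₂ * s) * ‖gradient F (ξ s) - gradient G (ξ s)‖ :=
  stmt_11_general d r c₁ c₂ ε AF AG hc₁ hc₂ hε F G hAF hAG
end

section
/- The function R(x) = λ ( (‖x‖² + 1)^{1/2} - (K² + 1)^{1/2} )² · 1_{{‖x‖ > K+1}} on R^d is (m, b)-dissipative for suitable m, b > 0 depending on λ, K, d; i.e., there exist m, b > 0 such that ⟨∇R(x), x⟩ ≥ m‖x‖² - b for all x ∈ R^d. -/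
/-!
Outside the closed ball of radius `K + 1` the function is `φ (‖x‖²)` with
`φ r = λ (√(r + 1) - √(K² + 1))²`, so its gradient is `2 φ'(‖x‖²) x` and
`⟪∇R x, x⟫ = 2λ (1 - √(K² + 1) / √(‖x‖² + 1)) ‖x‖²`, whose coefficient is at least its value
`m` on the sphere `‖x‖ = K + 1`. On the closed ball `R` vanishes along the segment `[0, x]`, so the
radial derivative `⟪∇R x, x⟫` is `0` (also on the sphere, where `R` jumps and the gradient is the
junk value `0`). Hence `b = m (K + 1)²` works.
-/

open RealInnerProductSpace Filter Topology

theorem hasDerivAt_sqrt_add_one_sub_sq (c : ℝ) {r : ℝ} (hr : 0 < r + 1) :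
    HasDerivAt (fun r => (√(r + 1) - c) ^ 2) (1 - c / √(r + 1)) r := by
  have hs : √(r + 1) ≠ 0 := (Real.sqrt_pos.2 hr).ne'
  refine ((((hasDerivAt_id' r).add_const 1).sqrt hr.ne').sub_const c).fun_pow 2 |>.congr_deriv ?_
  norm_num
  field_simp

section

variable {E : Type*} [NormedAddCommGroup E] [InnerProductSpace ℝ E] [CompleteSpace E]

theorem inner_gradient_self_eq_zero_of_eventually_smul_eq {f : E → ℝ} {x : E}
    (h : ∀ᶠ t in 𝓝[≤] (1 : ℝ), f (t • x) = f x) : ⟪gradient f x, x⟫ = 0 := by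
  by_cases hf : DifferentiableAt ℝ f x
  · have hray : HasDerivAt (fun t : ℝ => f (t • x)) ⟪gradient f x, x⟫ 1 := by
      have hfx := hasGradientAt_iff_hasFDerivAt.1 hf.hasGradientAt
      rw [← one_smul ℝ x] at hfx
      simpa [Function.comp_def] using hfx.comp_hasDerivAt 1 ((hasDerivAt_id (1 : ℝ)).smul_const x)
    exact (uniqueDiffWithinAt_Iic 1).eq_deriv _ hray.hasDerivWithinAt
      ((hasDerivWithinAt_const 1 _ (f x)).congr_of_eventuallyEq h (by simp))
  · rw [gradient_eq_zero_of_not_differentiableAt hf, inner_zero_left]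

theorem HasDerivAt.hasGradientAt_comp_norm_sq {φ : ℝ → ℝ} {φ' : ℝ} {x : E}
    (hφ : HasDerivAt φ φ' (‖x‖ ^ 2)) : HasGradientAt (fun y => φ (‖y‖ ^ 2)) ((2 * φ') • x) x := by
  rw [hasGradientAt_iff_hasFDerivAt]
  refine (hφ.comp_hasFDerivAt x (hasFDerivAt_id x).norm_sq).congr_fderiv ?_
  ext y
  simp only [id_eq, ContinuousLinearMap.comp_id, smul_apply, coe_innerSL_apply, nsmul_eq_mul,
    Nat.cast_ofNat, smul_eq_mul, map_smul, InnerProductSpace.toDual_apply_apply]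
  ring

noncomputable def regularizer (lam K : ℝ) (y : E) : ℝ :=
  if ‖y‖ > K + 1 then lam * (√(‖y‖ ^ 2 + 1) - √(K ^ 2 + 1)) ^ 2 else 0

variable {lam K : ℝ} {x : E}

theorem inner_gradient_regularizer_self_of_norm_le (hx : ‖x‖ ≤ K + 1) :
    ⟪gradient (regularizer lam K) x, x⟫ = 0 := by
  refine inner_gradient_self_eq_zero_of_eventually_smul_eq ?_
  filter_upwards [Ioc_mem_nhdsLE (zero_lt_one' ℝ)] with t ⟨ht₀, ht₁⟩
  have htx : ‖t • x‖ ≤ K + 1 := by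
    rw [norm_smul, Real.norm_of_nonneg ht₀.le]
    exact (mul_le_of_le_one_left (norm_nonneg x) ht₁).trans hx
  simp only [regularizer, gt_iff_lt, if_neg htx.not_gt, if_neg hx.not_gt]

theorem hasGradientAt_regularizer_of_lt_norm (hx : K + 1 < ‖x‖) :
    HasGradientAt (regularizer lam K)
      ((2 * (lam * (1 - √(K ^ 2 + 1) / √(‖x‖ ^ 2 + 1)))) • x) x := by
  have hφ := ((hasDerivAt_sqrt_add_one_sub_sq √(K ^ 2 + 1)
    (by positivity : 0 < ‖x‖ ^ 2 + 1)).const_mul lam).hasGradientAt_comp_norm_sq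
  refine hφ.congr_of_eventuallyEq ?_
  filter_upwards [(isOpen_lt continuous_const continuous_norm).mem_nhds hx] with y hy
  exact if_pos hy

end

theorem stmt_12 (d : ℕ) (lam K : ℝ) (hlam : 0 < lam) (hK : 0 < K) :
    ∃ m b : ℝ, 0 < m ∧ 0 < b ∧
      ∀ x : EuclideanSpace ℝ (Fin d),
        m * ‖x‖ ^ 2 - b ≤
          ⟪gradient (fun y : EuclideanSpace ℝ (Fin d) =>
              if ‖y‖ > K + 1 then
                lam * (Real.sqrt (‖y‖ ^ 2 + 1) - Real.sqrt (K ^ 2 + 1)) ^ 2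
              else 0) x, x⟫ := by
  set c := √(K ^ 2 + 1)
  set s₀ := √((K + 1) ^ 2 + 1)
  have hs₀ : 0 < s₀ := by positivity
  have hcs₀ : c < s₀ := Real.sqrt_lt_sqrt (by positivity) (by nlinarith)
  set m := 2 * (lam * (1 - c / s₀))
  have hm : 0 < m := by
    have : c / s₀ < 1 := (div_lt_one hs₀).2 hcs₀
    positivity
  refine ⟨m, m * (K + 1) ^ 2, hm, by positivity, fun x => ?_⟩
  change _ ≤ ⟪gradient (regularizer lam K) x, x⟫
  rcases le_or_gt ‖x‖ (K + 1) with hx | hx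
  · rw [inner_gradient_regularizer_self_of_norm_le hx, sub_nonpos]
    gcongr
  · rw [(hasGradientAt_regularizer_of_lt_norm hx).gradient, real_inner_smul_left,
      real_inner_self_eq_norm_sq]
    have hs : s₀ ≤ √(‖x‖ ^ 2 + 1) := Real.sqrt_le_sqrt (by gcongr)
    have hm_le : m ≤ 2 * (lam * (1 - c / √(‖x‖ ^ 2 + 1))) := by
      show 2 * (lam * (1 - c / s₀)) ≤ _
      gcongr
    calc m * ‖x‖ ^ 2 - m * (K + 1) ^ 2 ≤ m * ‖x‖ ^ 2 := sub_le_self _ (by positivity)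
      _ ≤ 2 * (lam * (1 - c / √(‖x‖ ^ 2 + 1))) * ‖x‖ ^ 2 := by gcongr
end

section
/- Contraction step for the case d(x,y)=1 with large Lyapunov values: in the setting above (P(x,V) ≤ V(x)/8 + K_V, Q(y,V) ≤ V(y)/8 + K_V, d ≤ 1), if d(x,y) = 1 and V(x)+V(y) ≥ 4K_V, then for every δ > 0, W_{d̃_δ}(P(x,·), Q(y,·))² ≤ max( (1+2δK_V)/(1+3δK_V), 1/2 ) · d̃_δ(x,y)², where d̃_δ(x,y) = √( d(x,y)(1 + δV(x) + δV(y)) ). -/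
open MeasureTheory ProbabilityTheory

/-- Wasserstein-type optimal transport cost for the cost function `c`. -/
noncomputable def Wcost {S : Type*} [MeasurableSpace S] (c : S → S → ℝ)
    (μ ν : Measure S) : ENNReal :=
  ⨅ (π : Measure (S × S)) (_ : π.map Prod.fst = μ ∧ π.map Prod.snd = ν),
    ∫⁻ p, ENNReal.ofReal (c p.1 p.2) ∂π

/-!
Couple `P x` and `Q y` independently. Jensen gives `W² ≤ E[d̃(X,Y)²] ≤ E[1 + δV(X) + δV(Y)]`, and
the drift condition bounds this by `1 + 2δK_V + δ(V x + V y)/8`. When `V x + V y ≥ 4K_V`, the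
Lyapunov term beats the additive constant, so this is at most
`(1 + 2δK_V)/(1 + 3δK_V) · (1 + δV x + δV y) = (1 + 2δK_V)/(1 + 3δK_V) · d̃(x,y)²`.
-/

theorem ENNReal.two_mul_le_add_sq (a b : ENNReal) : 2 * a * b ≤ a ^ 2 + b ^ 2 := by
  rcases eq_or_ne a ⊤ with rfl | ha
  · simp
  rcases eq_or_ne b ⊤ with rfl | hb
  · simp
  lift a to NNReal using ha
  lift b to NNReal using hb
  exact_mod_cast _root_.two_mul_le_add_sq a b

section Jensen

variable {α : Type*} [MeasurableSpace α] {μ : Measure α} [IsProbabilityMeasure μ]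

theorem two_mul_mul_lintegral_le (c : ENNReal) (f : α → ENNReal) :
    2 * c * ∫⁻ a, f a ∂μ ≤ c ^ 2 + ∫⁻ a, f a ^ 2 ∂μ :=
  calc 2 * c * ∫⁻ a, f a ∂μ ≤ ∫⁻ a, 2 * c * f a ∂μ := lintegral_const_mul_le _ _
    _ ≤ ∫⁻ a, c ^ 2 + f a ^ 2 ∂μ := lintegral_mono fun a => ENNReal.two_mul_le_add_sq c (f a)
    _ = c ^ 2 + ∫⁻ a, f a ^ 2 ∂μ := by
      rw [lintegral_add_left measurable_const, lintegral_const, measure_univ, mul_one]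

/-- Jensen's inequality for the square, from the tangent-line bound above at `c = ∫⁻ f`. Unlike
the library's Jensen it needs no measurability of `f`, which matters since `V` is not assumed
measurable. -/
theorem sq_lintegral_le_lintegral_sq (f : α → ENNReal) :
    (∫⁻ a, f a ∂μ) ^ 2 ≤ ∫⁻ a, f a ^ 2 ∂μ := by
  set I := ∫⁻ a, f a ∂μ
  set J := ∫⁻ a, f a ^ 2 ∂μ
  rcases eq_or_ne J ⊤ with hJ | hJ
  · exact hJ ▸ le_top
  have hI : I ≠ ⊤ := by
    have h := two_mul_mul_lintegral_le (μ := μ) 1 f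
    rw [mul_one, one_pow] at h
    exact ne_top_of_le_ne_top (ENNReal.add_ne_top.2 ⟨ENNReal.one_ne_top, hJ⟩)
      (le_trans (le_mul_of_one_le_left' one_le_two) h)
  have h := two_mul_mul_lintegral_le (μ := μ) I f
  rw [two_mul, add_mul, ← sq] at h
  exact ENNReal.le_of_add_le_add_left (ENNReal.pow_ne_top hI) h

end Jensen

theorem Wcost_le_lintegral_prod {S : Type*} [MeasurableSpace S] (c : S → S → ℝ)
    (μ ν : Measure S) [IsProbabilityMeasure μ] [IsProbabilityMeasure ν] :
    Wcost c μ ν ≤ ∫⁻ p, ENNReal.ofReal (c p.1 p.2) ∂μ.prod ν :=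
  iInf₂_le (μ.prod ν) ⟨Measure.fst_prod, Measure.snd_prod⟩

theorem lintegral_prod_add_le {α β : Type*} [MeasurableSpace α] [MeasurableSpace β]
    (μ : Measure α) (ν : Measure β) [IsProbabilityMeasure μ] [IsProbabilityMeasure ν]
    (f : α → ENNReal) (g : β → ENNReal) :
    ∫⁻ p, f p.1 + g p.2 ∂μ.prod ν ≤ ∫⁻ a, f a ∂μ + ∫⁻ b, g b ∂ν := by
  refine (lintegral_prod_le _).trans_eq ?_
  simp only [lintegral_add_left measurable_const, lintegral_const, measure_univ, mul_one]
  rw [lintegral_add_right _ measurable_const, lintegral_const, measure_univ, mul_one]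

theorem lintegral_prod_one_add_le {S : Type*} [MeasurableSpace S]
    (μ ν : Measure S) [IsProbabilityMeasure μ] [IsProbabilityMeasure ν]
    {V : S → ℝ} (hV : ∀ x, 0 ≤ V x) {δ a b : ℝ} (hδ : 0 ≤ δ) (ha : 0 ≤ a) (hb : 0 ≤ b)
    (hμ : ∫⁻ z, ENNReal.ofReal (V z) ∂μ ≤ ENNReal.ofReal a)
    (hν : ∫⁻ z, ENNReal.ofReal (V z) ∂ν ≤ ENNReal.ofReal b) :
    ∫⁻ p, ENNReal.ofReal (1 + δ * V p.1 + δ * V p.2) ∂μ.prod ν ≤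
      ENNReal.ofReal (1 + δ * a + δ * b) := by
  have hsplit : ∀ u v, 0 ≤ u → 0 ≤ v → ENNReal.ofReal (1 + δ * u + δ * v) =
      1 + ENNReal.ofReal δ * ENNReal.ofReal u + ENNReal.ofReal δ * ENNReal.ofReal v := by
    intro u v hu hv
    rw [ENNReal.ofReal_add (by positivity) (by positivity),
      ENNReal.ofReal_add zero_le_one (by positivity), ENNReal.ofReal_one,
      ENNReal.ofReal_mul hδ, ENNReal.ofReal_mul hδ]
  calc ∫⁻ p, ENNReal.ofReal (1 + δ * V p.1 + δ * V p.2) ∂μ.prod ν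
      = ∫⁻ p, (1 + ENNReal.ofReal δ * ENNReal.ofReal (V p.1))
          + ENNReal.ofReal δ * ENNReal.ofReal (V p.2) ∂μ.prod ν :=
        lintegral_congr fun p => hsplit _ _ (hV _) (hV _)
    _ ≤ ∫⁻ z, 1 + ENNReal.ofReal δ * ENNReal.ofReal (V z) ∂μ
          + ∫⁻ z, ENNReal.ofReal δ * ENNReal.ofReal (V z) ∂ν :=
        lintegral_prod_add_le μ ν _ _
    _ = 1 + ENNReal.ofReal δ * ∫⁻ z, ENNReal.ofReal (V z) ∂μ
          + ENNReal.ofReal δ * ∫⁻ z, ENNReal.ofReal (V z) ∂ν := by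
        rw [lintegral_add_left measurable_const, lintegral_const, measure_univ, mul_one,
          lintegral_const_mul' _ _ ENNReal.ofReal_ne_top,
          lintegral_const_mul' _ _ ENNReal.ofReal_ne_top]
    _ ≤ 1 + ENNReal.ofReal δ * ENNReal.ofReal a + ENNReal.ofReal δ * ENNReal.ofReal b := by
        gcongr
    _ = ENNReal.ofReal (1 + δ * a + δ * b) := (hsplit a b ha hb).symm

theorem ENNReal.ofReal_sqrt_mul_sq_le {t B : ℝ} (ht : t ≤ 1) (hB : 0 ≤ B) :
    ENNReal.ofReal (Real.sqrt (t * B)) ^ 2 ≤ ENNReal.ofReal B := by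
  calc ENNReal.ofReal (Real.sqrt (t * B)) ^ 2 ≤ ENNReal.ofReal (Real.sqrt B) ^ 2 := by
        gcongr; exact mul_le_of_le_one_left hB ht
    _ = ENNReal.ofReal B := by
        rw [← ENNReal.ofReal_pow (Real.sqrt_nonneg _), Real.sq_sqrt hB]

theorem drift_le_max_mul {K δ u v : ℝ} (hK : 0 < K) (hδ : 0 ≤ δ) (huv : 4 * K ≤ u + v) :
    1 + δ * (u / 8 + K) + δ * (v / 8 + K) ≤
      max ((1 + 2 * δ * K) / (1 + 3 * δ * K)) (1 / 2) * (1 + δ * u + δ * v) := by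
  have h3 : 0 < 1 + 3 * δ * K := by positivity
  have hdK : 0 ≤ δ * K := by positivity
  have key : 1 + δ * (u / 8 + K) + δ * (v / 8 + K) ≤
      (1 + 2 * δ * K) / (1 + 3 * δ * K) * (1 + δ * u + δ * v) := by
    rw [div_mul_eq_mul_div, le_div_iff₀ h3]
    nlinarith [mul_le_mul_of_nonneg_left huv hδ,
      mul_le_mul_of_nonneg_left huv (mul_nonneg hδ hdK)]
  exact key.trans (mul_le_mul_of_nonneg_right (le_max_left _ _) (by nlinarith))

theorem stmt_15_general {S : Type*} [MeasurableSpace S]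
    (d : S → S → ℝ) (hle : ∀ x y, d x y ≤ 1)
    (V : S → ℝ) (hV : ∀ x, 0 ≤ V x)
    (KV : ℝ) (hKV : 0 < KV)
    (P Q : Kernel S S) [IsMarkovKernel P] [IsMarkovKernel Q]
    (hPV : ∀ x, ∫⁻ z, ENNReal.ofReal (V z) ∂(P x) ≤ ENNReal.ofReal (V x / 8 + KV))
    (hQV : ∀ y, ∫⁻ z, ENNReal.ofReal (V z) ∂(Q y) ≤ ENNReal.ofReal (V y / 8 + KV))
    (δ : ℝ) (hδ : 0 < δ) (x y : S) (hxy : d x y = 1) (hVxy : 4 * KV ≤ V x + V y) :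
    (Wcost (fun a b => Real.sqrt (d a b * (1 + δ * V a + δ * V b))) (P x) (Q y)) ^ 2 ≤
      ENNReal.ofReal (max ((1 + 2 * δ * KV) / (1 + 3 * δ * KV)) (1 / 2)) *
        ENNReal.ofReal (Real.sqrt (d x y * (1 + δ * V x + δ * V y))) ^ 2 := by
  have hB : ∀ a b, 0 ≤ 1 + δ * V a + δ * V b := fun a b => by
    have := hV a; have := hV b; positivity
  calc (Wcost (fun a b => Real.sqrt (d a b * (1 + δ * V a + δ * V b))) (P x) (Q y)) ^ 2
      ≤ (∫⁻ p, ENNReal.ofReal (Real.sqrt (d p.1 p.2 * (1 + δ * V p.1 + δ * V p.2)))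
          ∂(P x).prod (Q y)) ^ 2 := by
        gcongr; exact Wcost_le_lintegral_prod _ _ _
    _ ≤ ∫⁻ p, ENNReal.ofReal (Real.sqrt (d p.1 p.2 * (1 + δ * V p.1 + δ * V p.2))) ^ 2
          ∂(P x).prod (Q y) := sq_lintegral_le_lintegral_sq _
    _ ≤ ∫⁻ p, ENNReal.ofReal (1 + δ * V p.1 + δ * V p.2) ∂(P x).prod (Q y) :=
        lintegral_mono fun p => ENNReal.ofReal_sqrt_mul_sq_le (hle _ _) (hB _ _)
    _ ≤ ENNReal.ofReal (1 + δ * (V x / 8 + KV) + δ * (V y / 8 + KV)) := by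
        have := hV x; have := hV y
        exact lintegral_prod_one_add_le _ _ hV hδ.le (by positivity) (by positivity)
          (hPV x) (hQV y)
    _ ≤ ENNReal.ofReal (max ((1 + 2 * δ * KV) / (1 + 3 * δ * KV)) (1 / 2)
          * (1 + δ * V x + δ * V y)) :=
        ENNReal.ofReal_le_ofReal (drift_le_max_mul hKV hδ.le hVxy)
    _ = _ := by
        rw [ENNReal.ofReal_mul (by positivity), hxy, one_mul,
          ← ENNReal.ofReal_pow (Real.sqrt_nonneg _), Real.sq_sqrt (hB x y)]

theorem stmt_15 {S : Type*} [TopologicalSpace S] [PolishSpace S]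
    [MeasurableSpace S] [BorelSpace S]
    (d : S → S → ℝ) (hsymm : ∀ x y, d x y = d y x)
    (hlsc : LowerSemicontinuous fun p : S × S => d p.1 p.2)
    (hzero : ∀ x y, d x y = 0 ↔ x = y)
    (hnonneg : ∀ x y, 0 ≤ d x y) (hle : ∀ x y, d x y ≤ 1)
    (V : S → ℝ) (hV : ∀ x, 0 ≤ V x)
    (KV : ℝ) (hKV : 0 < KV)
    (P Q : Kernel S S) [IsMarkovKernel P] [IsMarkovKernel Q]
    (hPV : ∀ x, ∫⁻ z, ENNReal.ofReal (V z) ∂(P x) ≤ ENNReal.ofReal (V x / 8 + KV))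
    (hQV : ∀ y, ∫⁻ z, ENNReal.ofReal (V z) ∂(Q y) ≤ ENNReal.ofReal (V y / 8 + KV))
    (δ : ℝ) (hδ : 0 < δ) (x y : S) (hxy : d x y = 1) (hVxy : 4 * KV ≤ V x + V y) :
    (Wcost (fun a b => Real.sqrt (d a b * (1 + δ * V a + δ * V b))) (P x) (Q y)) ^ 2 ≤
      ENNReal.ofReal (max ((1 + 2 * δ * KV) / (1 + 3 * δ * KV)) (1 / 2)) *
        ENNReal.ofReal (Real.sqrt (d x y * (1 + δ * V x + δ * V y))) ^ 2 :=
  stmt_15_general d hle V hV KV hKV P Q hPV hQV δ hδ x y hxy hVxy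
end
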